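/- arXiv:1009.4810 — 6 statements merged into one kernel-verified Lean document; each statement's English description precedes it below -/
import Mathlib

section
/- Let (a_n)_{n≥1} be a sequence with 0 < a_n < 1 uniformly distributed modulo one. Then (1/n) · ∑_{r=1}^n e^{H_r} / (r(1 + a_r^2)) → π e^γ / 4 as n → ∞. -/
/-!
Since `e^{H_r} / r = e^{H_r - log r} → e^γ` and the weights `1 / (1 + a_r²)` are bounded, Cesàro's
lemma reduces the claim to the convergence of the mean of `1 / (1 + a_r²)` to
`∫₀¹ dx / (1 + x²) = π / 4`. For a Lipschitz integrand, replacing `a_r` by `⌊m a_r⌋ / m` costs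
`O(1 / m)` uniformly in `n`; after this replacement the mean is a combination of the frequencies of
the intervals `[k / m, (k + 1) / m)`, so by uniform distribution it tends to a Riemann sum, and the
Moore–Osgood theorem exchanges the limits `n → ∞` and `m → ∞`.
-/

open Filter Finset Real
open scoped Topology NNReal

lemma natFloor_mul_eq_iff {x : ℝ} (hx : 0 ≤ x) {m : ℕ} (hm : 0 < m) (k : ℕ) :
    ⌊m * x⌋₊ = k ↔ k / m ≤ x ∧ x < (k + 1) / m := by
  have hm' : (0 : ℝ) < m := Nat.cast_pos.2 hm
  rw [Nat.floor_eq_iff (by positivity), div_le_iff₀ hm', lt_div_iff₀ hm', mul_comm x]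

lemma abs_sub_natFloor_mul_div_le {x : ℝ} (hx : 0 ≤ x) {m : ℕ} (hm : 0 < m) :
    |x - ⌊m * x⌋₊ / m| ≤ 1 / m := by
  have hfloor := (natFloor_mul_eq_iff hx hm _).1 rfl
  rw [abs_of_nonneg (by linarith), sub_le_iff_le_add, ← add_div, add_comm]
  exact hfloor.2.le

lemma lipschitzWith_inv_one_add_sq : LipschitzWith 1 (fun x : ℝ => (1 + x ^ 2)⁻¹) := by
  refine LipschitzWith.mk_one fun x y => ?_
  have hx : 0 < 1 + x ^ 2 := by positivity
  have hy : 0 < 1 + y ^ 2 := by positivity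
  have hxy : |x + y| ≤ (1 + x ^ 2) * (1 + y ^ 2) := by
    cases abs_cases (x + y) <;>
      nlinarith [sq_nonneg (x - 1), sq_nonneg (y - 1), sq_nonneg (x + 1), sq_nonneg (y + 1),
        mul_nonneg (sq_nonneg x) (sq_nonneg y)]
  rw [Real.dist_eq, Real.dist_eq, inv_sub_inv hx.ne' hy.ne', abs_div, abs_of_pos (mul_pos hx hy),
    div_le_iff₀ (mul_pos hx hy), show 1 + y ^ 2 - (1 + x ^ 2) = (y - x) * (x + y) by ring,
    abs_mul, abs_sub_comm]
  exact mul_le_mul_of_nonneg_left hxy (abs_nonneg _)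

namespace LipschitzOnWith

variable {f : ℝ → ℝ} {K : ℝ≥0}

lemma abs_mul_sub_integral_le {u v : ℝ} (huv : u ≤ v) (hf : LipschitzOnWith K f (Set.Icc u v)) :
    |(v - u) * f u - ∫ x in u..v, f x| ≤ K * (v - u) ^ 2 := by
  have hdist : ∀ x ∈ Set.uIoc u v, ‖f u - f x‖ ≤ K * (v - u) := fun x hx => by
    rw [Set.uIoc_of_le huv] at hx
    calc ‖f u - f x‖ ≤ K * dist u x :=
          hf.dist_le_mul _ (Set.left_mem_Icc.2 huv) _ (Set.Ioc_subset_Icc_self hx)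
      _ ≤ K * (v - u) := by
          rw [Real.dist_eq, abs_sub_comm, abs_of_pos (sub_pos.2 hx.1)]
          gcongr
          exact hx.2
  calc |(v - u) * f u - ∫ x in u..v, f x| = ‖∫ x in u..v, (f u - f x)‖ := by
        rw [intervalIntegral.integral_sub intervalIntegrable_const
          (hf.continuousOn.intervalIntegrable_of_Icc huv), intervalIntegral.integral_const,
          smul_eq_mul, Real.norm_eq_abs]
    _ ≤ K * (v - u) * |v - u| := intervalIntegral.norm_integral_le_of_norm_le_const hdist
    _ = K * (v - u) ^ 2 := by rw [abs_of_nonneg (sub_nonneg.2 huv)]; ring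

lemma abs_sum_range_div_sub_integral_le (hf : LipschitzOnWith K f (Set.Icc 0 1)) {m : ℕ}
    (hm : 0 < m) : |∑ k ∈ range m, f (k / m) / m - ∫ x in (0 : ℝ)..1, f x| ≤ K / m := by
  have hm' : (0 : ℝ) < m := Nat.cast_pos.2 hm
  have hle : ∀ k : ℕ, (k : ℝ) / m ≤ (k + 1 : ℕ) / m := fun k => by gcongr; omega
  have hsub : ∀ k < m, Set.Icc ((k : ℝ) / m) ((k + 1 : ℕ) / m) ⊆ Set.Icc 0 1 := fun k hk =>
    Set.Icc_subset_Icc (by positivity) ((div_le_one hm').2 (by exact_mod_cast hk))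
  have hsplit := intervalIntegral.sum_integral_adjacent_intervals fun k hk =>
    (hf.continuousOn.mono (hsub k hk)).intervalIntegrable_of_Icc (μ := MeasureTheory.volume)
      (hle k)
  simp only [Nat.cast_zero, zero_div, div_self hm'.ne'] at hsplit
  have hterm : ∀ k ∈ range m,
      |f (k / m) / m - ∫ x in (k : ℝ) / m..(k + 1 : ℕ) / m, f x| ≤ K * (1 / m) ^ 2 := by
    intro k hk
    have hlen : ((k + 1 : ℕ) : ℝ) / m - k / m = 1 / m := by push_cast; ring
    rw [← hlen, ← one_div_mul_eq_div, ← hlen]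
    exact abs_mul_sub_integral_le (hle k) (hf.mono (hsub k (mem_range.1 hk)))
  calc |∑ k ∈ range m, f (k / m) / m - ∫ x in (0 : ℝ)..1, f x|
      = |∑ k ∈ range m, (f (k / m) / m - ∫ x in (k : ℝ) / m..(k + 1 : ℕ) / m, f x)| := by
        rw [← hsplit, sum_sub_distrib]
    _ ≤ ∑ k ∈ range m, (K : ℝ) * (1 / m) ^ 2 :=
        (abs_sum_le_sum_abs _ _).trans (sum_le_sum hterm)
    _ = K / m := by rw [sum_const, card_range, nsmul_eq_mul]; field_simp

lemma tendsto_sum_range_div_integral (hf : LipschitzOnWith K f (Set.Icc 0 1)) :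
    Tendsto (fun m : ℕ => ∑ k ∈ range m, f (k / m) / m) atTop (𝓝 (∫ x in (0 : ℝ)..1, f x)) := by
  have hK : Tendsto (fun m : ℕ => (K : ℝ) / m) atTop (𝓝 0) :=
    tendsto_const_div_atTop_nhds_zero_nat _
  refine tendsto_iff_norm_sub_tendsto_zero.2
    (squeeze_zero' (Eventually.of_forall fun _ => norm_nonneg _) ?_ hK)
  filter_upwards [eventually_gt_atTop 0] with m hm
  exact hf.abs_sum_range_div_sub_integral_le hm

lemma abs_sum_div_sub_sum_natFloor_div_le (hf : LipschitzOnWith K f (Set.Icc 0 1))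
    {a : ℕ → ℝ} (ha : ∀ r, 1 ≤ r → 0 ≤ a r ∧ a r < 1) {m : ℕ} (hm : 0 < m) (n : ℕ) :
    |(∑ r ∈ Icc 1 n, f (a r)) / n - (∑ r ∈ Icc 1 n, f (⌊m * a r⌋₊ / m)) / n| ≤ K / m := by
  have hterm : ∀ r ∈ Icc 1 n, |f (a r) - f (⌊m * a r⌋₊ / m)| ≤ K / m := by
    intro r hr
    obtain ⟨ha0, ha1⟩ := ha r (mem_Icc.1 hr).1
    have hfloor := (natFloor_mul_eq_iff ha0 hm _).1 rfl
    have hmem : ((⌊m * a r⌋₊ : ℕ) : ℝ) / m ∈ Set.Icc 0 1 :=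
      ⟨by positivity, hfloor.1.trans ha1.le⟩
    calc |f (a r) - f (⌊m * a r⌋₊ / m)|
        ≤ K * |a r - ⌊m * a r⌋₊ / m| := hf.dist_le_mul _ ⟨ha0, ha1.le⟩ _ hmem
      _ ≤ K * (1 / m) := by gcongr; exact abs_sub_natFloor_mul_div_le ha0 hm
      _ = K / m := by ring
  rw [← _root_.sub_div, ← sum_sub_distrib, abs_div, Nat.abs_cast]
  refine div_le_of_le_mul₀ (Nat.cast_nonneg _) (by positivity) ?_
  calc |∑ r ∈ Icc 1 n, (f (a r) - f (⌊m * a r⌋₊ / m))|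
      ≤ ∑ r ∈ Icc 1 n, (K : ℝ) / m := (abs_sum_le_sum_abs _ _).trans (sum_le_sum hterm)
    _ = K / m * n := by rw [sum_const, Nat.card_Icc, nsmul_eq_mul]; simp [mul_comm]

end LipschitzOnWith

def UniformlyDistributedModOne (a : ℕ → ℝ) : Prop :=
  ∀ α β : ℝ, 0 ≤ α → α < β → β ≤ 1 →
    Tendsto (fun n : ℕ => (#{r ∈ Icc 1 n | α ≤ a r ∧ a r < β} : ℝ) / n) atTop (𝓝 (β - α))

namespace UniformlyDistributedModOne

variable {a : ℕ → ℝ}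

lemma tendsto_card_natFloor_mul_eq_div (hud : UniformlyDistributedModOne a)
    (ha : ∀ r, 1 ≤ r → 0 ≤ a r ∧ a r < 1) {m k : ℕ} (hk : k < m) :
    Tendsto (fun n : ℕ => (#{r ∈ Icc 1 n | ⌊m * a r⌋₊ = k} : ℝ) / n) atTop (𝓝 (1 / m)) := by
  have hm : 0 < m := by omega
  have hm' : (0 : ℝ) < m := Nat.cast_pos.2 hm
  have hbin := hud (k / m) ((k + 1) / m) (by positivity) (by gcongr; linarith)
    ((div_le_one hm').2 (by exact_mod_cast hk))
  rw [← _root_.sub_div, add_sub_cancel_left] at hbin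
  refine hbin.congr fun n => ?_
  congr 3
  exact filter_congr fun r hr => (natFloor_mul_eq_iff (ha r (mem_Icc.1 hr).1).1 hm k).symm

lemma tendsto_sum_natFloor_div (hud : UniformlyDistributedModOne a)
    (ha : ∀ r, 1 ≤ r → 0 ≤ a r ∧ a r < 1) (f : ℝ → ℝ) {m : ℕ} (hm : 0 < m) :
    Tendsto (fun n : ℕ => (∑ r ∈ Icc 1 n, f (⌊m * a r⌋₊ / m)) / n) atTop
      (𝓝 (∑ k ∈ range m, f (k / m) / m)) := by
  have hmaps : ∀ n, ∀ r ∈ Icc 1 n, ⌊m * a r⌋₊ ∈ range m := fun n r hr => by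
    obtain ⟨ha0, ha1⟩ := ha r (mem_Icc.1 hr).1
    rw [mem_range, Nat.floor_lt (by positivity)]
    exact mul_lt_of_lt_one_right (Nat.cast_pos.2 hm) ha1
  have hsum : ∀ n : ℕ, (∑ r ∈ Icc 1 n, f (⌊m * a r⌋₊ / m)) / n =
      ∑ k ∈ range m, f (k / m) * ((#{r ∈ Icc 1 n | ⌊m * a r⌋₊ = k} : ℝ) / n) := fun n => by
    rw [← sum_fiberwise_of_maps_to' (hmaps n) (fun k : ℕ => f (k / m)), sum_div]
    refine sum_congr rfl fun k _ => ?_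
    rw [sum_const, nsmul_eq_mul]
    ring
  simp_rw [hsum, div_eq_mul_one_div (f _)]
  exact tendsto_finsetSum _ fun k hk =>
    (hud.tendsto_card_natFloor_mul_eq_div ha (mem_range.1 hk)).const_mul _

theorem tendsto_sum_div_integral_of_lipschitzOnWith (hud : UniformlyDistributedModOne a)
    (ha : ∀ r, 1 ≤ r → 0 ≤ a r ∧ a r < 1) {f : ℝ → ℝ} {K : ℝ≥0}
    (hf : LipschitzOnWith K f (Set.Icc 0 1)) :
    Tendsto (fun n : ℕ => (∑ r ∈ Icc 1 n, f (a r)) / n) atTop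
      (𝓝 (∫ x in (0 : ℝ)..1, f x)) := by
  have hunif : TendstoUniformly (fun (m n : ℕ) => (∑ r ∈ Icc 1 n, f (⌊m * a r⌋₊ / m)) / n)
      (fun n => (∑ r ∈ Icc 1 n, f (a r)) / n) atTop := by
    refine Metric.tendstoUniformly_iff.2 fun ε hε => ?_
    filter_upwards [eventually_gt_atTop 0,
      (tendsto_const_div_atTop_nhds_zero_nat (K : ℝ)).eventually (gt_mem_nhds hε)]
      with m hm hKm n
    exact (hf.abs_sum_div_sub_sum_natFloor_div_le ha hm n).trans_lt hKm
  exact hunif.tendsto_of_eventually_tendsto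
    ((eventually_gt_atTop 0).mono fun m hm => hud.tendsto_sum_natFloor_div ha f hm)
    hf.tendsto_sum_range_div_integral

end UniformlyDistributedModOne

lemma tendsto_sum_mul_div_of_tendsto {b c : ℕ → ℝ} {B β γ : ℝ} (hb : ∀ r, |b r| ≤ B)
    (hc : Tendsto c atTop (𝓝 γ))
    (hβ : Tendsto (fun n : ℕ => (∑ r ∈ Icc 1 n, b r) / n) atTop (𝓝 β)) :
    Tendsto (fun n : ℕ => (∑ r ∈ Icc 1 n, c r * b r) / n) atTop (𝓝 (γ * β)) := by
  have hces : Tendsto (fun n : ℕ => B * ((n : ℝ)⁻¹ * ∑ i ∈ range n, |c (i + 1) - γ|)) atTop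
      (𝓝 0) := by
    simpa using (((hc.comp (tendsto_add_atTop_nat 1)).sub_const γ).abs.cesaro).const_mul B
  have herr : Tendsto (fun n : ℕ => (∑ r ∈ Icc 1 n, (c r - γ) * b r) / n) atTop (𝓝 0) := by
    refine squeeze_zero_norm (fun n => ?_) hces
    have hshift : ∑ i ∈ range n, |c (i + 1) - γ| = ∑ r ∈ Icc 1 n, |c r - γ| := by
      rw [range_eq_Ico, sum_Ico_add' (fun r => |c r - γ|), zero_add, Ico_add_one_right_eq_Icc]
    rw [hshift, norm_div, Real.norm_eq_abs, Real.norm_natCast, div_eq_inv_mul, mul_left_comm,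
      mul_sum]
    gcongr
    calc |∑ r ∈ Icc 1 n, (c r - γ) * b r| ≤ ∑ r ∈ Icc 1 n, |(c r - γ) * b r| :=
          abs_sum_le_sum_abs _ _
      _ ≤ ∑ r ∈ Icc 1 n, B * |c r - γ| := sum_le_sum fun r _ => by
          rw [abs_mul, mul_comm]
          exact mul_le_mul_of_nonneg_right (hb r) (abs_nonneg _)
  rw [← add_zero (γ * β)]
  refine ((hβ.const_mul γ).add herr).congr fun n => ?_
  rw [mul_div_assoc', ← add_div, mul_sum, ← sum_add_distrib]
  congr 1
  exact sum_congr rfl fun r _ => by ring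

lemma tendsto_exp_harmonic_div :
    Tendsto (fun r : ℕ => exp (harmonic r) / r) atTop (𝓝 (exp eulerMascheroniConstant)) := by
  refine ((continuous_exp.tendsto _).comp tendsto_harmonic_sub_log).congr' ?_
  filter_upwards [eventually_gt_atTop 0] with r hr
  rw [Function.comp_apply, exp_sub, exp_log (Nat.cast_pos.2 hr)]

/-- If `a` is uniformly distributed mod one, then
`(1/n) * ∑_{r=1}^n exp (H r) / (r * (1 + (a r)^2)) → π * exp γ / 4`,
where `H r` is the `r`-th harmonic number and `γ` the Euler–Mascheroni constant. -/
theorem sum_exp_harmonic_div_tendsto_pi_exp_gamma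
    (a : ℕ → ℝ) (ha : ∀ n, 1 ≤ n → 0 < a n ∧ a n < 1)
    (hud : ∀ α β : ℝ, 0 ≤ α → α < β → β ≤ 1 →
      Tendsto (fun n : ℕ =>
          (((Finset.Icc 1 n).filter fun r => α ≤ a r ∧ a r < β).card : ℝ) / n)
        atTop (nhds (β - α)))
    (H : ℕ → ℝ) (hH : ∀ r, H r = ∑ k ∈ Finset.Icc 1 r, (1 : ℝ) / k) :
    Tendsto (fun n : ℕ =>
        (1 / (n : ℝ)) *
          ∑ r ∈ Finset.Icc 1 n, Real.exp (H r) / (r * (1 + (a r) ^ 2)))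
      atTop (nhds (π * Real.exp Real.eulerMascheroniConstant / 4)) := by
  have hH' : ∀ r, H r = harmonic r := fun r => by
    rw [hH, harmonic_eq_sum_Icc]
    push_cast
    simp only [one_div]
  have hweyl := UniformlyDistributedModOne.tendsto_sum_div_integral_of_lipschitzOnWith hud
    (fun r hr => ⟨(ha r hr).1.le, (ha r hr).2⟩) lipschitzWith_inv_one_add_sq.lipschitzOnWith
  rw [integral_inv_one_add_sq, arctan_one, arctan_zero, sub_zero] at hweyl
  have hbound : ∀ r, |(1 + a r ^ 2)⁻¹| ≤ 1 := fun r => by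
    rw [abs_of_pos (by positivity)]
    exact inv_le_one_of_one_le₀ (by nlinarith)
  rw [show π * exp eulerMascheroniConstant / 4 = exp eulerMascheroniConstant * (π / 4) by ring]
  refine (tendsto_sum_mul_div_of_tendsto hbound tendsto_exp_harmonic_div hweyl).congr fun n => ?_
  simp only [hH', one_div_mul_eq_div, ← div_eq_mul_inv, div_div]
end

section
/- (Equivalence Theorem) Let (d_n)_{n≥1} be positive reals with partial sums S_n = ∑_{i=1}^n d_i satisfying S_n → ∞ and S_{n−1}/S_n → 1 as n → ∞. Then for every continuous function f : [0,1] → ℝ, (1/S_n) · ∑_{r=1}^n d_r f(S_r/S_n) → ∫_0^1 f(x) dx as n → ∞. -/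
open Filter Finset Topology

/-!
The sum is the right Riemann sum of `f` for the partition
`0 = S 0 / S n ≤ S 1 / S n ≤ ⋯ ≤ S n / S n = 1` of `[0, 1]`, whose cells have lengths `d r / S n`.
This mesh tends to `0`: the ratio condition says exactly that `d n / S n = 1 - S (n - 1) / S n → 0`,
which controls the late cells, while `S n → ∞` makes the finitely many early cells small.
Uniform continuity of `f` on `[0, 1]` then makes the Riemann sums converge to the integral.
-/

noncomputable def rightRiemannSum (f : ℝ → ℝ) (t : ℕ → ℝ) (n : ℕ) : ℝ :=
  ∑ i ∈ range n, (t (i + 1) - t i) * f (t (i + 1))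

theorem abs_mul_sub_integral_le {f : ℝ → ℝ} {u v ε : ℝ} (huv : u ≤ v)
    (hf : IntervalIntegrable f MeasureTheory.volume u v)
    (hfε : ∀ x ∈ Set.Ioc u v, |f v - f x| ≤ ε) :
    |(v - u) * f v - ∫ x in u..v, f x| ≤ ε * (v - u) := by
  have hconst : (v - u) * f v = ∫ _ in u..v, f v := by simp
  rw [hconst, ← intervalIntegral.integral_sub intervalIntegrable_const hf]
  calc |∫ x in u..v, (f v - f x)| ≤ ε * |v - u| :=
        intervalIntegral.norm_integral_le_of_norm_le_const (f := fun x => f v - f x) fun x hx =>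
          hfε x (Set.uIoc_of_le huv ▸ hx)
    _ = ε * (v - u) := by rw [abs_of_nonneg (sub_nonneg.2 huv)]

theorem ContinuousOn.exists_abs_rightRiemannSum_sub_integral_le {f : ℝ → ℝ} {a b ε : ℝ}
    (hf : ContinuousOn f (Set.Icc a b)) (hε : 0 < ε) :
    ∃ δ > 0, ∀ (t : ℕ → ℝ) (n : ℕ), Monotone t → t 0 = a → t n = b →
      (∀ i < n, t (i + 1) - t i < δ) →
      |rightRiemannSum f t n - ∫ x in a..b, f x| ≤ ε * (b - a) := by
  obtain ⟨δ, hδ, hfδ⟩ := Metric.uniformContinuousOn_iff.1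
    (isCompact_Icc.uniformContinuousOn_of_continuous hf) ε hε
  refine ⟨δ, hδ, fun t n ht ht0 htn hmesh => ?_⟩
  subst ht0 htn
  have hcell : ∀ i < n, Set.Icc (t i) (t (i + 1)) ⊆ Set.Icc (t 0) (t n) := fun i hi =>
    Set.Icc_subset_Icc (ht (Nat.zero_le i)) (ht hi)
  have hint : ∀ i < n, IntervalIntegrable f MeasureTheory.volume (t i) (t (i + 1)) :=
    fun i hi => (hf.mono (hcell i hi)).intervalIntegrable_of_Icc (ht i.le_succ)
  have hosc : ∀ i < n, ∀ x ∈ Set.Ioc (t i) (t (i + 1)), |f (t (i + 1)) - f x| ≤ ε := by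
    intro i hi x hx
    have hdist : dist (t (i + 1)) x < δ := by
      rw [Real.dist_eq, abs_of_nonneg (by linarith [hx.2])]
      linarith [hmesh i hi, hx.1]
    exact (hfδ _ (hcell i hi ⟨ht i.le_succ, le_rfl⟩) x
      (hcell i hi (Set.Ioc_subset_Icc_self hx)) hdist).le
  rw [rightRiemannSum, ← intervalIntegral.sum_integral_adjacent_intervals hint,
    ← sum_sub_distrib]
  calc |∑ i ∈ range n, ((t (i + 1) - t i) * f (t (i + 1)) - ∫ x in t i..t (i + 1), f x)|
      ≤ ∑ i ∈ range n, |(t (i + 1) - t i) * f (t (i + 1)) - ∫ x in t i..t (i + 1), f x| :=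
        abs_sum_le_sum_abs _ _
    _ ≤ ∑ i ∈ range n, ε * (t (i + 1) - t i) := sum_le_sum fun i hi =>
        abs_mul_sub_integral_le (ht i.le_succ) (hint i (mem_range.1 hi)) (hosc i (mem_range.1 hi))
    _ = ε * (t n - t 0) := by rw [← mul_sum, sum_range_sub]

section PartialSums

variable {d S : ℕ → ℝ}

theorem partialSum_zero (hS : ∀ n, S n = ∑ i ∈ Icc 1 n, d i) : S 0 = 0 := by
  simp [hS]

theorem partialSum_succ (hS : ∀ n, S n = ∑ i ∈ Icc 1 n, d i) (n : ℕ) :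
    S (n + 1) = S n + d (n + 1) := by
  rw [hS, hS, sum_Icc_succ_top (by omega)]

theorem monotone_partialSum (hd : ∀ n, 1 ≤ n → 0 ≤ d n) (hS : ∀ n, S n = ∑ i ∈ Icc 1 n, d i) :
    Monotone S :=
  monotone_nat_of_le_succ fun n => by
    rw [partialSum_succ hS]
    linarith [hd (n + 1) (by omega)]

theorem le_partialSum (hd : ∀ n, 1 ≤ n → 0 ≤ d n) (hS : ∀ n, S n = ∑ i ∈ Icc 1 n, d i)
    {n : ℕ} (hn : 1 ≤ n) : d n ≤ S n := by
  rw [hS]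
  exact single_le_sum (fun i hi => hd i (mem_Icc.1 hi).1) (mem_Icc.2 ⟨hn, le_rfl⟩)

theorem partialSum_pos (hd : ∀ n, 1 ≤ n → 0 < d n) (hS : ∀ n, S n = ∑ i ∈ Icc 1 n, d i)
    {n : ℕ} (hn : 1 ≤ n) : 0 < S n :=
  (hd n hn).trans_le (le_partialSum (fun i hi => (hd i hi).le) hS hn)

theorem tendsto_div_partialSum (hd : ∀ n, 1 ≤ n → 0 < d n)
    (hS : ∀ n, S n = ∑ i ∈ Icc 1 n, d i)
    (hSratio : Tendsto (fun n : ℕ => S (n - 1) / S n) atTop (𝓝 1)) :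
    Tendsto (fun n => d n / S n) atTop (𝓝 0) := by
  have h := hSratio.const_sub 1
  rw [sub_self] at h
  refine h.congr' ?_
  filter_upwards [eventually_ge_atTop 1] with n hn
  obtain ⟨k, rfl⟩ := Nat.exists_eq_add_of_le' hn
  rw [Nat.add_sub_cancel, one_sub_div (partialSum_pos hd hS hn).ne', partialSum_succ hS,
    add_sub_cancel_left]

theorem eventually_forall_div_partialSum_lt (hd : ∀ n, 1 ≤ n → 0 < d n)
    (hS : ∀ n, S n = ∑ i ∈ Icc 1 n, d i) (hSdiv : Tendsto S atTop atTop)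
    (hSratio : Tendsto (fun n : ℕ => S (n - 1) / S n) atTop (𝓝 1)) {δ : ℝ} (hδ : 0 < δ) :
    ∀ᶠ n in atTop, ∀ r ∈ Icc 1 n, d r / S n < δ := by
  have hmono := monotone_partialSum (fun i hi => (hd i hi).le) hS
  obtain ⟨m, hm⟩ := eventually_atTop.1 (((tendsto_div_partialSum hd hS hSratio).eventually
    (gt_mem_nhds hδ)).and (eventually_ge_atTop 1))
  filter_upwards [hSdiv.eventually_gt_atTop (S m / δ), eventually_ge_atTop 1]
    with n hn hn1 r hr
  have hSn := partialSum_pos hd hS hn1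
  rcases le_or_gt m r with hmr | hrm
  · calc d r / S n ≤ d r / S r :=
          div_le_div_of_nonneg_left (hd r (mem_Icc.1 hr).1).le (partialSum_pos hd hS
            (mem_Icc.1 hr).1) (hmono (mem_Icc.1 hr).2)
      _ < δ := (hm r hmr).1
  · calc d r / S n ≤ S m / S n := div_le_div_of_nonneg_right
          ((le_partialSum (fun i hi => (hd i hi).le) hS (mem_Icc.1 hr).1).trans
            (hmono hrm.le)) hSn.le
      _ < δ := by
        rw [div_lt_iff₀ hδ] at hn
        rw [div_lt_iff₀ hSn]
        linarith

theorem one_div_mul_sum_eq_rightRiemannSum (hS : ∀ n, S n = ∑ i ∈ Icc 1 n, d i)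
    (f : ℝ → ℝ) (n : ℕ) :
    1 / S n * ∑ r ∈ Icc 1 n, d r * f (S r / S n) = rightRiemannSum f (fun i => S i / S n) n := by
  rw [rightRiemannSum, mul_sum, ← Ico_add_one_right_eq_Icc, sum_Ico_eq_sum_range,
    Nat.add_sub_cancel]
  refine sum_congr rfl fun i _ => ?_
  rw [add_comm 1 i, ← sub_div, partialSum_succ hS]
  ring

end PartialSums

/-- Equivalence Theorem: If `d` is positive with partial sums `S n → ∞`
and `S (n-1) / S n → 1`, then for every continuous `f` on `[0,1]`,
`(1 / S n) * ∑_{r=1}^n d r * f (S r / S n) → ∫_0^1 f`. -/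
theorem equivalence_theorem
    (d : ℕ → ℝ) (hd : ∀ n, 1 ≤ n → 0 < d n)
    (S : ℕ → ℝ) (hS : ∀ n, S n = ∑ i ∈ Finset.Icc 1 n, d i)
    (hSdiv : Tendsto S atTop atTop)
    (hSratio : Tendsto (fun n : ℕ => S (n - 1) / S n) atTop (nhds 1))
    (f : ℝ → ℝ) (hf : ContinuousOn f (Set.Icc 0 1)) :
    Tendsto (fun n : ℕ =>
        (1 / S n) * ∑ r ∈ Finset.Icc 1 n, d r * f (S r / S n))
      atTop (nhds (∫ x in (0:ℝ)..1, f x)) := by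
  have hmono := monotone_partialSum (fun i hi => (hd i hi).le) hS
  refine Metric.tendsto_nhds.2 fun ε hε => ?_
  obtain ⟨δ, hδ, hriemann⟩ := hf.exists_abs_rightRiemannSum_sub_integral_le (half_pos hε)
  filter_upwards [eventually_forall_div_partialSum_lt hd hS hSdiv hSratio hδ,
    eventually_ge_atTop 1] with n hmesh hn
  have hSn := partialSum_pos hd hS hn
  have hcells : ∀ i < n, S (i + 1) / S n - S i / S n < δ := fun i hi => by
    rw [← sub_div, partialSum_succ hS, add_sub_cancel_left]
    exact hmesh (i + 1) (mem_Icc.2 ⟨by omega, hi⟩)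
  rw [Real.dist_eq, one_div_mul_sum_eq_rightRiemannSum hS]
  calc _ ≤ ε / 2 * (1 - 0) :=
        hriemann _ n (fun i j hij => div_le_div_of_nonneg_right (hmono hij) hSn.le)
          (by rw [partialSum_zero hS, zero_div]) (div_self hSn.ne') hcells
    _ < ε := by linarith
end

section
/- Let (b_n)_{n≥1} be a positive, monotonically increasing sequence of reals such that for every t with 0 < t < 1, b_{⌊nt⌋}/b_n → t as n → ∞. Then (b_n) is asymptotically equidistributed modulo one, i.e. for all 0 ≤ α < β ≤ 1, (1/n)·#{r : 1 ≤ r ≤ n, α ≤ b_r/b_n ≤ β} → β − α as n → ∞. -/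
/-!
Fix `t ∈ [0, 1]`. For `0 < s < 1` the hypothesis eventually puts `b ⌊n s⌋ / b n` on the same
side of `t` as `s`, so by monotonicity the number of `r ≤ n` with `b r / b n` below `t` is at
least `⌊n s⌋` when `s < t` and at most `⌊n s⌋` when `s > t`. Letting `s → t`, the proportion of
such `r` tends to `t`; the count over `[α, β]` is the difference of the counts for `β` and `α`.
-/

open Filter Finset

noncomputable def ratioCount (b : ℕ → ℝ) (P : ℝ → Prop) [DecidablePred P] (n : ℕ) : ℕ :=
  #{r ∈ Icc 1 n | P (b r / b n)}

section RatioCount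

variable {b : ℕ → ℝ} {P : ℝ → Prop} [DecidablePred P]

theorem ratioCount_le (n : ℕ) :
    ratioCount b P n ≤ n := by
  rw [ratioCount]
  simpa using card_filter_le (Icc 1 n) fun r => P (b r / b n)

theorem filter_ratio_subset {Q : ℝ → Prop} [DecidablePred Q] (hPQ : ∀ x, P x → Q x) (n : ℕ) :
    {r ∈ Icc 1 n | P (b r / b n)} ⊆ {r ∈ Icc 1 n | Q (b r / b n)} :=
  monotone_filter_right _ fun _ _ => hPQ _

theorem ratioCount_mono {Q : ℝ → Prop} [DecidablePred Q] (hPQ : ∀ x, P x → Q x) (n : ℕ) :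
    ratioCount b P n ≤ ratioCount b Q n :=
  card_le_card (filter_ratio_subset hPQ n)

theorem ratioCount_sub {Q : ℝ → Prop} [DecidablePred Q] (hPQ : ∀ x, P x → Q x) (n : ℕ) :
    ratioCount b (fun x => Q x ∧ ¬P x) n = ratioCount b Q n - ratioCount b P n := by
  rw [ratioCount, filter_and_not, card_sdiff_of_subset (filter_ratio_subset hPQ n)]
  rfl

variable {t : ℝ} {m n : ℕ}

theorem le_ratioCount (hbmono : MonotoneOn b (Set.Ici 1)) (hbn : 0 < b n) (hmn : m ≤ n)
    (hP : ∀ x, x < t → P x) (hm : b m / b n < t) : m ≤ ratioCount b P n := by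
  have hsub : Icc 1 m ⊆ {r ∈ Icc 1 n | P (b r / b n)} := by
    intro r hr
    obtain ⟨hr1, hrm⟩ := mem_Icc.1 hr
    have hbr : b r ≤ b m := hbmono (Set.mem_Ici.2 hr1) (Set.mem_Ici.2 (hr1.trans hrm)) hrm
    refine mem_filter.2 ⟨mem_Icc.2 ⟨hr1, hrm.trans hmn⟩, hP _ ?_⟩
    exact (div_le_div_of_nonneg_right hbr hbn.le).trans_lt hm
  simpa [ratioCount] using card_le_card hsub

theorem ratioCount_le_of_lt (hbmono : MonotoneOn b (Set.Ici 1)) (hbn : 0 < b n) (hm1 : 1 ≤ m)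
    (hP : ∀ x, P x → x ≤ t) (hm : t < b m / b n) : ratioCount b P n ≤ m := by
  have hsub : {r ∈ Icc 1 n | P (b r / b n)} ⊆ Icc 1 m := by
    intro r hr
    obtain ⟨hrn, hPr⟩ := mem_filter.1 hr
    have hr1 := (mem_Icc.1 hrn).1
    refine mem_Icc.2 ⟨hr1, le_of_not_gt fun hmr => ?_⟩
    have hbm : b m ≤ b r := hbmono (Set.mem_Ici.2 hm1) (Set.mem_Ici.2 hr1) hmr.le
    exact ((hP _ hPr).trans_lt hm).not_ge (div_le_div_of_nonneg_right hbm hbn.le)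
  simpa [ratioCount] using card_le_card hsub

end RatioCount

theorem tendsto_natFloor_mul_div_natCast {s : ℝ} (hs : 0 ≤ s) :
    Tendsto (fun n : ℕ => (⌊(n : ℝ) * s⌋₊ : ℝ) / n) atTop (nhds s) := by
  simpa only [mul_comm, Function.comp_def] using
    (tendsto_nat_floor_mul_div_atTop hs).comp tendsto_natCast_atTop_atTop

theorem tendsto_div_of_floor_mul_le {c : ℕ → ℕ} (hc : ∀ n, c n ≤ n) {t : ℝ} (ht0 : 0 ≤ t)
    (hlow : ∀ s, 0 < s → s < t → ∀ᶠ n : ℕ in atTop, ⌊(n : ℝ) * s⌋₊ ≤ c n)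
    (hup : ∀ s, t < s → s < 1 → ∀ᶠ n : ℕ in atTop, c n ≤ ⌊(n : ℝ) * s⌋₊) :
    Tendsto (fun n => (c n : ℝ) / n) atTop (nhds t) := by
  rw [tendsto_order]
  constructor
  · intro a hat
    rcases lt_or_ge a 0 with ha | ha
    · exact Eventually.of_forall fun n => ha.trans_le (by positivity)
    obtain ⟨s, has, hst⟩ := exists_between hat
    filter_upwards [(tendsto_natFloor_mul_div_natCast (ha.trans has.le)).eventually_const_lt has,
      hlow s (ha.trans_lt has) hst] with n hfloor hcn
    exact hfloor.trans_le (div_le_div_of_nonneg_right (by exact_mod_cast hcn) n.cast_nonneg)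
  · intro a hta
    rcases lt_or_ge 1 a with ha | ha
    · refine Eventually.of_forall fun n => lt_of_le_of_lt ?_ ha
      exact div_le_one_of_le₀ (by exact_mod_cast hc n) n.cast_nonneg
    obtain ⟨s, hts, hsa⟩ := exists_between hta
    filter_upwards [(tendsto_natFloor_mul_div_natCast (ht0.trans hts.le)).eventually_lt_const hsa,
      hup s hts (hsa.trans_le ha)] with n hfloor hcn
    exact (div_le_div_of_nonneg_right (by exact_mod_cast hcn) n.cast_nonneg).trans_lt hfloor

theorem tendsto_ratioCount_div (b : ℕ → ℝ) (hbpos : ∀ n, 1 ≤ n → 0 < b n)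
    (hbmono : MonotoneOn b (Set.Ici 1))
    (hratio : ∀ t : ℝ, 0 < t → t < 1 →
      Tendsto (fun n : ℕ => b ⌊(n : ℝ) * t⌋₊ / b n) atTop (nhds t))
    {P : ℝ → Prop} [DecidablePred P] {t : ℝ} (ht0 : 0 ≤ t) (ht1 : t ≤ 1)
    (hlt : ∀ x, x < t → P x) (hle : ∀ x, P x → x ≤ t) :
    Tendsto (fun n => (ratioCount b P n : ℝ) / n) atTop (nhds t) := by
  refine tendsto_div_of_floor_mul_le ratioCount_le ht0 (fun s hs0 hst => ?_)
    fun s hts hs1 => ?_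
  · filter_upwards [(hratio s hs0 (hst.trans_le ht1)).eventually_lt_const hst,
      eventually_ge_atTop 1] with n hs hn1
    refine le_ratioCount hbmono (hbpos n hn1) (Nat.floor_le_of_le ?_) hlt hs
    exact mul_le_of_le_one_right n.cast_nonneg (hst.trans_le ht1).le
  · have hs0 : 0 < s := ht0.trans_lt hts
    have hfloor : ∀ᶠ n : ℕ in atTop, 1 ≤ ⌊(n : ℝ) * s⌋₊ :=
      (tendsto_nat_floor_atTop.comp
        (tendsto_natCast_atTop_atTop.atTop_mul_const hs0)).eventually_ge_atTop 1
    filter_upwards [(hratio s hs0 hs1).eventually_const_lt hts, hfloor,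
      eventually_ge_atTop 1] with n hs hs1 hn1
    exact ratioCount_le_of_lt hbmono (hbpos n hn1) hs1 hle hs

/-- If `b` is a positive monotonically increasing sequence with
`b ⌊n*t⌋ / b n → t` for every `0 < t < 1`, then `b` is asymptotically equidistributed
modulo one. -/
theorem asymptotically_equidistributed_of_ratio_tendsto
    (b : ℕ → ℝ) (hbpos : ∀ n, 1 ≤ n → 0 < b n)
    (hbmono : MonotoneOn b (Set.Ici 1))
    (hratio : ∀ t : ℝ, 0 < t → t < 1 →
      Tendsto (fun n : ℕ => b ⌊(n : ℝ) * t⌋₊ / b n) atTop (nhds t)) :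
    ∀ α β : ℝ, 0 ≤ α → α < β → β ≤ 1 →
      Tendsto (fun n : ℕ =>
          (((Finset.Icc 1 n).filter fun r => α ≤ b r / b n ∧ b r / b n ≤ β).card : ℝ) / n)
        atTop (nhds (β - α)) := by
  intro α β hα hαβ hβ
  have hcount (n : ℕ) : ((Finset.Icc 1 n).filter fun r => α ≤ b r / b n ∧ b r / b n ≤ β).card
      = ratioCount b (· ≤ β) n - ratioCount b (· < α) n := by
    rw [← ratioCount_sub fun x hx => (hx.trans hαβ).le, ratioCount]
    simp only [not_lt, and_comm]
  have hle := tendsto_ratioCount_div b hbpos hbmono hratio (P := (· ≤ β))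
    (hα.trans hαβ.le) hβ (fun _ h => h.le) fun _ h => h
  have hlt := tendsto_ratioCount_div b hbpos hbmono hratio (P := (· < α))
    hα (hαβ.le.trans hβ) (fun _ h => h) fun _ h => h.le
  refine (hle.sub hlt).congr fun n => ?_
  rw [hcount, Nat.cast_sub, sub_div]
  exact ratioCount_mono (fun x hx => (hx.trans hαβ).le) n
end

section
/- Let (b_n)_{n≥1} and (c_n)_{n≥1} be positive, monotonically increasing sequences of reals such that for every t with 0 < t < 1, b_{⌊nt⌋}/b_n → t and c_{⌊nt⌋}/c_n → t as n → ∞. Let α, β ≥ 0 with α + β > 0 and set s_n = α b_n + β c_n. Then for every t with 0 < t < 1, s_{⌊nt⌋}/s_n → t as n → ∞; consequently (s_n) is asymptotically equidistributed modulo one. -/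
open Filter Finset

/-- Generic counting lemma: if the filtered set eventually contains `Icc 1 ⌊n t'⌋`
for every `t' < t` and is contained in `Icc 1 ⌊n t''⌋` for every `t'' > t`, then the
normalized count tends to `t`. -/
lemma count_aux (P : ℕ → ℕ → Prop) [∀ n, DecidablePred (P n)]
    (t : ℝ) (ht0 : 0 < t) (ht1 : t < 1)
    (h1 : ∀ t' : ℝ, 0 < t' → t' < t →
      ∀ᶠ n : ℕ in atTop, ∀ r ∈ Finset.Icc 1 ⌊(n : ℝ) * t'⌋₊, P n r)
    (h2 : ∀ t'' : ℝ, t < t'' → t'' < 1 →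
      ∀ᶠ n : ℕ in atTop, ∀ r ∈ Finset.Icc 1 n, P n r → r ≤ ⌊(n : ℝ) * t''⌋₊) :
    Tendsto (fun n : ℕ => (((Finset.Icc 1 n).filter (P n)).card : ℝ) / n) atTop (nhds t) := by
  rw [Metric.tendsto_nhds]
  intro ε hε
  set δ : ℝ := min (ε / 3) (min (t / 2) ((1 - t) / 2)) with hδdef
  have hδ0 : 0 < δ := lt_min (by linarith) (lt_min (by linarith) (by linarith))
  have hδε : δ ≤ ε / 3 := min_le_left _ _
  have hδt : δ ≤ t / 2 := le_trans (min_le_right _ _) (min_le_left _ _)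
  have hδ1t : δ ≤ (1 - t) / 2 := le_trans (min_le_right _ _) (min_le_right _ _)
  have ht'0 : 0 < t - δ := by linarith
  have ht''1 : t + δ < 1 := by linarith
  filter_upwards [h1 (t - δ) ht'0 (by linarith), h2 (t + δ) (by linarith) ht''1,
    eventually_ge_atTop (⌈2 / ε⌉₊ + 1)] with n hn1 hn2 hn3
  have hceil : (⌈2 / ε⌉₊ : ℕ) < n := Nat.lt_of_lt_of_le (Nat.lt_succ_self _) hn3
  have hn2ε : 2 / ε < (n : ℝ) :=
    lt_of_le_of_lt (Nat.le_ceil _) (by exact_mod_cast hceil)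
  have hn0 : 0 < (n : ℝ) := lt_trans (by positivity) hn2ε
  have hinv : 1 / (n : ℝ) < ε / 2 := by
    rw [div_lt_div_iff₀ hn0 (by norm_num : (0:ℝ) < 2)]
    have h2' : 2 < (n : ℝ) * ε := by
      rw [div_lt_iff₀ hε] at hn2ε; linarith
    linarith
  set k : ℕ := ((Finset.Icc 1 n).filter (P n)).card with hk
  have hsub : Finset.Icc 1 ⌊(n : ℝ) * (t - δ)⌋₊ ⊆ (Finset.Icc 1 n).filter (P n) := by
    intro r hr
    have hr' := Finset.mem_Icc.mp hr
    rw [Finset.mem_filter, Finset.mem_Icc]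
    refine ⟨⟨hr'.1, ?_⟩, hn1 r hr⟩
    calc r ≤ ⌊(n : ℝ) * (t - δ)⌋₊ := hr'.2
      _ ≤ ⌊(n : ℝ)⌋₊ := Nat.floor_le_floor (by nlinarith)
      _ = n := Nat.floor_natCast n
  have hlow : ⌊(n : ℝ) * (t - δ)⌋₊ ≤ k := by
    have := Finset.card_le_card hsub
    simpa [Nat.card_Icc] using this
  have hsub2 : (Finset.Icc 1 n).filter (P n) ⊆ Finset.Icc 1 ⌊(n : ℝ) * (t + δ)⌋₊ := by
    intro r hr
    rw [Finset.mem_filter] at hr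
    rw [Finset.mem_Icc]
    exact ⟨(Finset.mem_Icc.mp hr.1).1, hn2 r hr.1 hr.2⟩
  have hup : k ≤ ⌊(n : ℝ) * (t + δ)⌋₊ := by
    have := Finset.card_le_card hsub2
    simpa [Nat.card_Icc] using this
  have hlowR : (n : ℝ) * (t - δ) - 1 ≤ (k : ℝ) :=
    le_trans (Nat.sub_one_lt_floor _).le (by exact_mod_cast hlow)
  have hupR : (k : ℝ) ≤ (n : ℝ) * (t + δ) :=
    le_trans (by exact_mod_cast hup) (Nat.floor_le (by positivity))
  rw [Real.dist_eq, abs_lt]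
  constructor
  · have h' : t - δ - 1 / n ≤ (k : ℝ) / n := by
      rw [le_div_iff₀ hn0]
      have he : (t - δ - 1 / n) * n = n * (t - δ) - 1 := by
        field_simp
      rw [he]
      linarith [hlowR]
    linarith [h', hinv, hδε]
  · have h' : (k : ℝ) / n ≤ t + δ := by
      rw [div_le_iff₀ hn0]
      nlinarith
    nlinarith [h', hδε]

lemma count_le_tendsto (s : ℕ → ℝ) (hpos : ∀ n, 1 ≤ n → 0 < s n)
    (hmono : MonotoneOn s (Set.Ici 1))
    (hratio : ∀ t : ℝ, 0 < t → t < 1 →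
      Tendsto (fun n : ℕ => s ⌊(n : ℝ) * t⌋₊ / s n) atTop (nhds t))
    (w : ℝ) (hw0 : 0 < w) (hw1 : w < 1) :
    Tendsto (fun n : ℕ => (((Finset.Icc 1 n).filter fun r => s r ≤ w * s n).card : ℝ) / n)
      atTop (nhds w) := by
  apply count_aux _ w hw0 hw1
  · intro t' h0 hlt
    have h := (hratio t' h0 (hlt.trans hw1)).eventually_lt_const hlt
    filter_upwards [h, eventually_ge_atTop 1] with n hn hn1
    intro r hr
    obtain ⟨h1r, h2r⟩ := Finset.mem_Icc.mp hr
    have hsn := hpos n hn1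
    have hmon : s r ≤ s ⌊(n : ℝ) * t'⌋₊ := hmono h1r (le_trans h1r h2r) h2r
    rw [div_lt_iff₀ hsn] at hn
    linarith
  · intro t'' hlt h1
    have h := (hratio t'' (hw0.trans hlt) h1).eventually_const_lt hlt
    have htend : Tendsto (fun n : ℕ => (n : ℝ) * t'') atTop atTop :=
      Tendsto.atTop_mul_const (hw0.trans hlt) tendsto_natCast_atTop_atTop
    filter_upwards [h, htend.eventually_ge_atTop 1, eventually_ge_atTop 1] with n hn hnf hn1
    intro r hr hP
    by_contra hcon
    push_neg at hcon
    have hfl1 : 1 ≤ ⌊(n : ℝ) * t''⌋₊ := Nat.le_floor (by exact_mod_cast hnf)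
    have hm : s ⌊(n : ℝ) * t''⌋₊ ≤ s r :=
      hmono hfl1 (le_trans hfl1 hcon.le) hcon.le
    have hsn := hpos n hn1
    rw [lt_div_iff₀ hsn] at hn
    linarith

lemma count_lt_tendsto (s : ℕ → ℝ) (hpos : ∀ n, 1 ≤ n → 0 < s n)
    (hmono : MonotoneOn s (Set.Ici 1))
    (hratio : ∀ t : ℝ, 0 < t → t < 1 →
      Tendsto (fun n : ℕ => s ⌊(n : ℝ) * t⌋₊ / s n) atTop (nhds t))
    (w : ℝ) (hw0 : 0 < w) (hw1 : w < 1) :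
    Tendsto (fun n : ℕ => (((Finset.Icc 1 n).filter fun r => s r < w * s n).card : ℝ) / n)
      atTop (nhds w) := by
  apply count_aux _ w hw0 hw1
  · intro t' h0 hlt
    have h := (hratio t' h0 (hlt.trans hw1)).eventually_lt_const hlt
    filter_upwards [h, eventually_ge_atTop 1] with n hn hn1
    intro r hr
    obtain ⟨h1r, h2r⟩ := Finset.mem_Icc.mp hr
    have hsn := hpos n hn1
    have hmon : s r ≤ s ⌊(n : ℝ) * t'⌋₊ := hmono h1r (le_trans h1r h2r) h2r
    rw [div_lt_iff₀ hsn] at hn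
    linarith
  · intro t'' hlt h1
    have h := (hratio t'' (hw0.trans hlt) h1).eventually_const_lt hlt
    have htend : Tendsto (fun n : ℕ => (n : ℝ) * t'') atTop atTop :=
      Tendsto.atTop_mul_const (hw0.trans hlt) tendsto_natCast_atTop_atTop
    filter_upwards [h, htend.eventually_ge_atTop 1, eventually_ge_atTop 1] with n hn hnf hn1
    intro r hr hP
    by_contra hcon
    push_neg at hcon
    have hfl1 : 1 ≤ ⌊(n : ℝ) * t''⌋₊ := Nat.le_floor (by exact_mod_cast hnf)
    have hm : s ⌊(n : ℝ) * t''⌋₊ ≤ s r :=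
      hmono hfl1 (le_trans hfl1 hcon.le) hcon.le
    have hsn := hpos n hn1
    rw [lt_div_iff₀ hsn] at hn
    linarith

/-- If `b` and `c` are positive monotonically increasing sequences with
`b ⌊n*t⌋ / b n → t` and `c ⌊n*t⌋ / c n → t` for every `0 < t < 1`, and `α, β ≥ 0` with
`α + β > 0`, then `s n = α * b n + β * c n` satisfies `s ⌊n*t⌋ / s n → t` and is
asymptotically equidistributed modulo one. -/
theorem linear_combination_asymptotically_equidistributed
    (b c : ℕ → ℝ)
    (hbpos : ∀ n, 1 ≤ n → 0 < b n) (hcpos : ∀ n, 1 ≤ n → 0 < c n)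
    (hbmono : MonotoneOn b (Set.Ici 1)) (hcmono : MonotoneOn c (Set.Ici 1))
    (hbratio : ∀ t : ℝ, 0 < t → t < 1 →
      Tendsto (fun n : ℕ => b ⌊(n : ℝ) * t⌋₊ / b n) atTop (nhds t))
    (hcratio : ∀ t : ℝ, 0 < t → t < 1 →
      Tendsto (fun n : ℕ => c ⌊(n : ℝ) * t⌋₊ / c n) atTop (nhds t))
    (α β : ℝ) (hα : 0 ≤ α) (hβ : 0 ≤ β) (hαβ : 0 < α + β)
    (s : ℕ → ℝ) (hs : ∀ n, s n = α * b n + β * c n) :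
    (∀ t : ℝ, 0 < t → t < 1 →
      Tendsto (fun n : ℕ => s ⌊(n : ℝ) * t⌋₊ / s n) atTop (nhds t)) ∧
    (∀ u v : ℝ, 0 ≤ u → u < v → v ≤ 1 →
      Tendsto (fun n : ℕ =>
          (((Finset.Icc 1 n).filter fun r => u ≤ s r / s n ∧ s r / s n ≤ v).card : ℝ) / n)
        atTop (nhds (v - u))) := by
  have hspos : ∀ n, 1 ≤ n → 0 < s n := by
    intro n hn
    rcases lt_or_ge 0 α with hα' | hα'
    · rw [hs]; nlinarith [hbpos n hn, hcpos n hn, mul_nonneg hβ (hcpos n hn).le]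
    · have hβ' : 0 < β := by linarith
      rw [hs]; nlinarith [hbpos n hn, hcpos n hn, mul_nonneg hα (hbpos n hn).le]
  have hsmono : MonotoneOn s (Set.Ici 1) := by
    intro x hx y hy hxy
    rw [hs, hs]
    exact add_le_add (mul_le_mul_of_nonneg_left (hbmono hx hy hxy) hα)
      (mul_le_mul_of_nonneg_left (hcmono hx hy hxy) hβ)
  have hsratio : ∀ t : ℝ, 0 < t → t < 1 →
      Tendsto (fun n : ℕ => s ⌊(n : ℝ) * t⌋₊ / s n) atTop (nhds t) := by
    intro t ht0 ht1
    have hb := hbratio t ht0 ht1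
    have hc := hcratio t ht0 ht1
    rw [← tendsto_sub_nhds_zero_iff]
    apply squeeze_zero_norm'
      (a := fun n : ℕ => |b ⌊(n : ℝ) * t⌋₊ / b n - t| + |c ⌊(n : ℝ) * t⌋₊ / c n - t|)
    · filter_upwards [eventually_ge_atTop 1] with n hn
      have hbn := hbpos n hn
      have hcn := hcpos n hn
      have hsn := hspos n hn
      set m := ⌊(n : ℝ) * t⌋₊
      have hsum : α * b n + β * c n ≠ 0 := by rw [← hs]; exact hsn.ne'
      have hkey : s m / s n - t =
          (α * b n * (b m / b n - t) + β * c n * (c m / c n - t)) / s n := by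
        rw [hs, hs]
        field_simp
        ring
      rw [Real.norm_eq_abs, hkey, abs_div, abs_of_pos hsn, div_le_iff₀ hsn]
      set u := b m / b n - t
      set wv := c m / c n - t
      have habs : |α * b n * u + β * c n * wv| ≤ α * b n * |u| + β * c n * |wv| := by
        calc |α * b n * u + β * c n * wv| ≤ |α * b n * u| + |β * c n * wv| := abs_add_le _ _
          _ = α * b n * |u| + β * c n * |wv| := by
            rw [abs_mul (α * b n), abs_mul (β * c n), abs_of_nonneg (mul_nonneg hα hbn.le),
              abs_of_nonneg (mul_nonneg hβ hcn.le)]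
      have hb1 : α * b n ≤ s n := by rw [hs]; nlinarith [mul_nonneg hβ hcn.le]
      have hc1 : β * c n ≤ s n := by rw [hs]; nlinarith [mul_nonneg hα hbn.le]
      nlinarith [abs_nonneg u, abs_nonneg wv, mul_nonneg hα hbn.le, mul_nonneg hβ hcn.le,
        habs]
    · have : Tendsto (fun n : ℕ => |b ⌊(n : ℝ) * t⌋₊ / b n - t| + |c ⌊(n : ℝ) * t⌋₊ / c n - t|)
          atTop (nhds (|t - t| + |t - t|)) :=
        ((hb.sub tendsto_const_nhds).abs).add ((hc.sub tendsto_const_nhds).abs)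
      simpa using this
  refine ⟨hsratio, ?_⟩
  intro u v hu huv hv
  have hv0 : 0 < v := lt_of_le_of_lt hu huv
  have hu1 : u < 1 := lt_of_lt_of_le huv hv
  have hAt : Tendsto
      (fun n : ℕ => (((Finset.Icc 1 n).filter fun r => s r ≤ v * s n).card : ℝ) / n)
      atTop (nhds v) := by
    rcases eq_or_lt_of_le hv with hveq | hvlt
    · subst hveq
      have heq : ∀ᶠ n : ℕ in atTop,
          (1 : ℝ) = (((Finset.Icc 1 n).filter fun r => s r ≤ 1 * s n).card : ℝ) / n := by
        filter_upwards [eventually_ge_atTop 1] with n hn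
        have hfull : ((Finset.Icc 1 n).filter fun r => s r ≤ 1 * s n) = Finset.Icc 1 n := by
          apply Finset.filter_true_of_mem
          intro r hr
          obtain ⟨h1r, h2r⟩ := Finset.mem_Icc.mp hr
          have := hsmono h1r (le_trans h1r h2r) h2r
          linarith
        rw [hfull, Nat.card_Icc]
        have : n + 1 - 1 = n := by omega
        rw [this, div_self (Nat.cast_ne_zero.mpr (by omega))]
      exact Tendsto.congr' heq (by simpa using tendsto_const_nhds)
    · exact count_le_tendsto s hspos hsmono hsratio v hv0 hvlt
  have hBt : Tendsto
      (fun n : ℕ => (((Finset.Icc 1 n).filter fun r => s r < u * s n).card : ℝ) / n)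
      atTop (nhds u) := by
    rcases hu.eq_or_lt with hueq | hult
    · subst hueq
      have heq : ∀ n : ℕ,
          (0 : ℝ) = (((Finset.Icc 1 n).filter fun r => s r < 0 * s n).card : ℝ) / n := by
        intro n
        have hemp : ((Finset.Icc 1 n).filter fun r => s r < 0 * s n) = ∅ := by
          rw [Finset.filter_eq_empty_iff]
          intro r hr
          obtain ⟨h1r, h2r⟩ := Finset.mem_Icc.mp hr
          have := hspos r h1r
          simp only [zero_mul, not_lt]
          linarith
        rw [hemp]
        simp
      exact Tendsto.congr heq tendsto_const_nhds
    · exact count_lt_tendsto s hspos hsmono hsratio u hult hu1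
  have key : ∀ᶠ n : ℕ in atTop,
      (((Finset.Icc 1 n).filter fun r => s r ≤ v * s n).card : ℝ) / n -
        (((Finset.Icc 1 n).filter fun r => s r < u * s n).card : ℝ) / n =
      (((Finset.Icc 1 n).filter fun r => u ≤ s r / s n ∧ s r / s n ≤ v).card : ℝ) / n := by
    filter_upwards [eventually_ge_atTop 1] with n hn
    have hsn := hspos n hn
    have hcards := Finset.card_filter_add_card_filter_not
      (s := (Finset.Icc 1 n).filter fun r => s r ≤ v * s n)
      (p := fun r => u * s n ≤ s r)
    rw [Finset.filter_filter, Finset.filter_filter] at hcards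
    have e1 : ((Finset.Icc 1 n).filter fun r => s r ≤ v * s n ∧ u * s n ≤ s r) =
        (Finset.Icc 1 n).filter fun r => u ≤ s r / s n ∧ s r / s n ≤ v := by
      apply Finset.filter_congr
      intro r _
      rw [le_div_iff₀ hsn, div_le_iff₀ hsn]
      constructor
      · rintro ⟨h1, h2⟩; exact ⟨h2, h1⟩
      · rintro ⟨h1, h2⟩; exact ⟨h2, h1⟩
    have e2 : ((Finset.Icc 1 n).filter fun r => s r ≤ v * s n ∧ ¬ u * s n ≤ s r) =
        (Finset.Icc 1 n).filter fun r => s r < u * s n := by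
      apply Finset.filter_congr
      intro r _
      simp only [not_le]
      constructor
      · rintro ⟨_, h2⟩; exact h2
      · intro h
        refine ⟨?_, h⟩
        have : u * s n ≤ v * s n := mul_le_mul_of_nonneg_right huv.le hsn.le
        linarith
    rw [e1, e2] at hcards
    rw [← hcards]
    push_cast
    ring
  exact Tendsto.congr' key (hAt.sub hBt)
end

section
/- Let a ≥ 0 and b ≥ 0 be real numbers. Then lim_{n→∞} (∑_{r=1}^n r^{ab+a+b}) / (∑_{r=1}^n r^a · (1^a + 2^a + … + r^a)^b) = (a+1)^b. -/
/-!
Comparing with `∫ x^a dx` gives `1^a + ⋯ + r^a ~ r^(a+1)/(a+1)`, hence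
`r^a (1^a + ⋯ + r^a)^b ~ r^(ab+a+b) / (a+1)^b`. Summing asymptotically equivalent nonnegative
terms whose partial sums diverge preserves the equivalence (a discrete L'Hôpital rule), so the
two sums in the ratio differ asymptotically by the factor `(a+1)^b`.
-/

open Filter Finset Asymptotics Topology

theorem Finset.sum_Icc_one_eq_sum_range {M : Type*} [AddCommMonoid M] (f : ℕ → M) (n : ℕ) :
    ∑ r ∈ Icc 1 n, f r = ∑ i ∈ range n, f (i + 1) := by
  rw [range_eq_Ico, sum_Ico_add' f 0 n 1]
  rfl

namespace Asymptotics

theorem isEquivalent_of_le_of_le {α : Type*} {l : Filter α} {f g h : α → ℝ}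
    (hgf : g ≤ᶠ[l] f) (hfh : f ≤ᶠ[l] h) (hhg : h ~[l] g) : f ~[l] g := by
  refine IsLittleO.isEquivalent (IsBigO.trans_isLittleO (IsBigO.of_bound' ?_) hhg.isLittleO)
  filter_upwards [hgf, hfh] with x hgfx hfhx
  simp only [Pi.sub_apply, Real.norm_eq_abs]
  rw [abs_of_nonneg (sub_nonneg.2 hgfx), abs_of_nonneg (sub_nonneg.2 (hgfx.trans hfhx))]
  linarith

theorem IsEquivalent.sum_range {u v : ℕ → ℝ} (h : u ~[atTop] v) (hv : 0 ≤ v)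
    (hv_sum : Tendsto (fun n => ∑ i ∈ range n, v i) atTop atTop) :
    (fun n => ∑ i ∈ range n, u i) ~[atTop] fun n => ∑ i ∈ range n, v i :=
  (h.isLittleO.sum_range hv hv_sum).congr_left fun n => by simp [sum_sub_distrib]

theorem IsEquivalent.sum_Icc_one {u v : ℕ → ℝ} (h : u ~[atTop] v) (hv : 0 ≤ v)
    (hv_sum : Tendsto (fun n => ∑ i ∈ Icc 1 n, v i) atTop atTop) :
    (fun n => ∑ i ∈ Icc 1 n, u i) ~[atTop] fun n => ∑ i ∈ Icc 1 n, v i := by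
  simp only [sum_Icc_one_eq_sum_range] at hv_sum ⊢
  exact (h.comp_tendsto (tendsto_add_atTop_nat 1)).sum_range (fun i => hv (i + 1)) hv_sum

end Asymptotics

theorem tendsto_sum_Icc_div_sum_Icc_of_isEquivalent {u v : ℕ → ℝ} {K : ℝ} (hK : 0 < K)
    (h : v ~[atTop] fun n => u n / K) (hu : 0 ≤ u)
    (hu_sum : Tendsto (fun n => ∑ i ∈ Icc 1 n, u i) atTop atTop) :
    Tendsto (fun n => (∑ i ∈ Icc 1 n, u i) / ∑ i ∈ Icc 1 n, v i) atTop (𝓝 K) := by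
  have hsum : (fun n => ∑ i ∈ Icc 1 n, v i) ~[atTop] fun n => (∑ i ∈ Icc 1 n, u i) / K := by
    simpa only [sum_div] using h.sum_Icc_one (fun n => div_nonneg (hu n) hK.le)
      (by simpa only [sum_div] using hu_sum.atTop_div_const hK)
  refine (IsEquivalent.refl.div hsum).symm.tendsto_nhds (tendsto_const_nhds.congr' ?_)
  filter_upwards [hu_sum.eventually_gt_atTop 0] with n hn
  simp only [Pi.div_apply]
  field_simp

theorem natCast_rpow_add_one_div_le_sum_Icc_rpow {a : ℝ} (ha : 0 ≤ a) (n : ℕ) :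
    (n : ℝ) ^ (a + 1) / (a + 1) ≤ ∑ i ∈ Icc 1 n, (i : ℝ) ^ a := by
  have hmono : MonotoneOn (fun x : ℝ => x ^ a) (Set.Icc 0 (0 + n)) :=
    fun x hx y _ hxy => Real.rpow_le_rpow hx.1 hxy ha
  have h := hmono.integral_le_sum
  rw [zero_add, integral_rpow (Or.inl (by linarith)), Real.zero_rpow (by linarith), sub_zero]
    at h
  simpa [sum_Icc_one_eq_sum_range] using h

theorem sum_Icc_rpow_le_natCast_add_one_rpow_add_one_div {a : ℝ} (ha : 0 ≤ a) (n : ℕ) :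
    ∑ i ∈ Icc 1 n, (i : ℝ) ^ a ≤ ((n : ℝ) + 1) ^ (a + 1) / (a + 1) := by
  have hmono : MonotoneOn (fun x : ℝ => x ^ a) (Set.Icc 1 (1 + n)) :=
    fun x hx y _ hxy => Real.rpow_le_rpow (zero_le_one.trans hx.1) hxy ha
  have h := hmono.sum_le_integral
  rw [integral_rpow (Or.inl (by linarith)), Real.one_rpow] at h
  calc ∑ i ∈ Icc 1 n, (i : ℝ) ^ a = ∑ i ∈ range n, (1 + (i : ℝ)) ^ a := by
        simp [sum_Icc_one_eq_sum_range, add_comm]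
    _ ≤ ((1 + n) ^ (a + 1) - 1) / (a + 1) := h
    _ ≤ ((n : ℝ) + 1) ^ (a + 1) / (a + 1) := by
        rw [add_comm (1 : ℝ)]
        gcongr
        exact sub_le_self _ zero_le_one

theorem isEquivalent_sum_Icc_rpow {a : ℝ} (ha : 0 ≤ a) :
    (fun n : ℕ => ∑ i ∈ Icc 1 n, (i : ℝ) ^ a) ~[atTop] fun n => (n : ℝ) ^ (a + 1) / (a + 1) := by
  have hshift : (fun n : ℕ => (n : ℝ) + 1) ~[atTop] fun n => (n : ℝ) :=
    IsEquivalent.refl.add_const_of_norm_tendsto_atTop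
      (tendsto_norm_atTop_atTop.comp tendsto_natCast_atTop_atTop)
  have hupper : (fun n : ℕ => ((n : ℝ) + 1) ^ (a + 1) / (a + 1)) ~[atTop]
      fun n => (n : ℝ) ^ (a + 1) / (a + 1) :=
    (hshift.rpow (fun n => Nat.cast_nonneg n)).div IsEquivalent.refl
  exact isEquivalent_of_le_of_le
    (Eventually.of_forall (natCast_rpow_add_one_div_le_sum_Icc_rpow ha))
    (Eventually.of_forall (sum_Icc_rpow_le_natCast_add_one_rpow_add_one_div ha)) hupper

theorem isEquivalent_rpow_mul_sum_Icc_rpow_rpow {a : ℝ} (ha : 0 ≤ a) (b : ℝ) :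
    (fun r : ℕ => (r : ℝ) ^ a * (∑ i ∈ Icc 1 r, (i : ℝ) ^ a) ^ b) ~[atTop]
      fun r => (r : ℝ) ^ (a * b + a + b) / (a + 1) ^ b := by
  have hS := (isEquivalent_sum_Icc_rpow ha).rpow (fun n => by positivity) (r := b)
  refine (IsEquivalent.refl.mul hS).congr_right ?_
  filter_upwards [eventually_gt_atTop 0] with r hr
  have hr' : (0 : ℝ) < r := by exact_mod_cast hr
  simp only [Pi.mul_apply, Pi.pow_apply]
  rw [Real.div_rpow (by positivity) (by linarith), ← Real.rpow_mul hr'.le, mul_div_assoc',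
    ← Real.rpow_add hr']
  ring_nf

/-- For `a ≥ 0`, `b ≥ 0`,
`(∑_{r=1}^n r^(ab+a+b)) / (∑_{r=1}^n r^a (1^a + … + r^a)^b) → (a+1)^b`. -/
theorem ratio_of_power_sums_tendsto
    (a b : ℝ) (ha : 0 ≤ a) (hb : 0 ≤ b) :
    Tendsto (fun n : ℕ =>
        (∑ r ∈ Finset.Icc 1 n, (r : ℝ) ^ (a * b + a + b)) /
          (∑ r ∈ Finset.Icc 1 n,
            (r : ℝ) ^ a * (∑ i ∈ Finset.Icc 1 r, (i : ℝ) ^ a) ^ b))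
      atTop (nhds ((a + 1) ^ b)) := by
  have hp : 0 ≤ a * b + a + b := by positivity
  refine tendsto_sum_Icc_div_sum_Icc_of_isEquivalent (u := fun r => (r : ℝ) ^ (a * b + a + b))
    (by positivity) (isEquivalent_rpow_mul_sum_Icc_rpow_rpow ha b) (fun r => by positivity) ?_
  refine (isEquivalent_sum_Icc_rpow hp).symm.tendsto_atTop ?_
  exact ((tendsto_rpow_atTop (by linarith)).comp tendsto_natCast_atTop_atTop).atTop_div_const
    (by linarith)
end

section
/- Let θ(x) = ∑_{p ≤ x, p prime} ln p denote the first Chebyshev function. Then ∑_{p ≤ x, p prime} ln p / θ(p) = ln x + O(1), i.e. there exists a constant C > 0 such that for all real x ≥ 2, |∑_{p ≤ x, p prime} ln p / θ(p) − ln x| ≤ C. -/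
open Filter Finset Real Asymptotics

/-!
For a prime `p` we have `log p = θ p - θ (p - 1)`, so `log p / θ p = 1 - θ (p - 1) / θ p`.
Since `1 - 1/t ≤ log t ≤ t - 1`, this agrees with `log θ p - log θ (p - 1)` up to an error at
most `(log p / θ (p - 1)) ^ 2`. The sum therefore telescopes to `log θ x + O(1)`: the errors are
`O((log p / p) ^ 2)` by Chebyshev's lower bound `θ n ≫ n`, hence summable. Finally
`θ x ≍ x` gives `log θ x = log x + O(1)`.
-/

theorem abs_sub_div_sub_log_sub_log_le {a b : ℝ} (ha : 0 < a) (hab : a ≤ b) :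
    |(b - a) / b - (log b - log a)| ≤ ((b - a) / a) ^ 2 := by
  have hb : 0 < b := ha.trans_le hab
  have hlower : (b - a) / b ≤ log b - log a := by
    have := one_sub_inv_le_log_of_pos (div_pos hb ha)
    rwa [log_div hb.ne' ha.ne', inv_div, one_sub_div hb.ne'] at this
  have hupper : log b - log a ≤ (b - a) / a := by
    have := log_le_sub_one_of_pos (div_pos hb ha)
    rwa [log_div hb.ne' ha.ne', div_sub_one ha.ne'] at this
  have hgap : (b - a) / a - (b - a) / b ≤ ((b - a) / a) ^ 2 := by
    rw [div_sub_div _ _ ha.ne' hb.ne', div_pow]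
    apply div_le_div₀ (sq_nonneg _) (le_of_eq (by ring)) (by positivity)
    nlinarith
  rw [abs_sub_comm, abs_of_nonneg (sub_nonneg.2 hlower)]
  linarith

theorem abs_sum_sub_div_sub_log_sub_log_le {u : ℕ → ℝ} (hu : Monotone u) {m N : ℕ}
    (hm : 0 < u m) (hmN : m ≤ N) :
    |∑ n ∈ Ico m N, (u (n + 1) - u n) / u (n + 1) - (log (u N) - log (u m))| ≤
      ∑ n ∈ Ico m N, ((u (n + 1) - u n) / u n) ^ 2 := by
  rw [← sum_Ico_sub (fun n ↦ log (u n)) hmN, ← sum_sub_distrib]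
  refine (abs_sum_le_sum_abs _ _).trans (sum_le_sum fun n hn ↦ ?_)
  exact abs_sub_div_sub_log_sub_log_le (hm.trans_le (hu (mem_Ico.1 hn).1)) (hu n.le_succ)

theorem abs_log_sub_log_le_of_mul_le_of_le_mul {x y c d : ℝ} (hx : 0 < x) (hc : 0 < c)
    (hcy : c * x ≤ y) (hyd : y ≤ d * x) : |log y - log x| ≤ |log c| + |log d| := by
  have hd : 0 < d := pos_of_mul_pos_left ((mul_pos hc hx).trans_le (hcy.trans hyd)) hx.le
  have h1 := log_le_log (mul_pos hc hx) hcy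
  have h2 := log_le_log ((mul_pos hc hx).trans_le hcy) hyd
  rw [log_mul hc.ne' hx.ne'] at h1
  rw [log_mul hd.ne' hx.ne'] at h2
  rw [abs_le]
  constructor <;>
    linarith [neg_abs_le (log c), le_abs_self (log d), abs_nonneg (log c), abs_nonneg (log d)]

theorem summable_log_div_self_sq : Summable fun n : ℕ ↦ (log n / n) ^ 2 := by
  refine Summable.of_nonneg_of_le (fun n ↦ sq_nonneg _) (fun n ↦ ?_)
    ((summable_nat_rpow.2 (by norm_num : (-3 / 2 : ℝ) < -1)).mul_left 16)
  rcases n.eq_zero_or_pos with rfl | hn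
  · simp
  have hn' : (0 : ℝ) < n := by exact_mod_cast hn
  have hlog : log n ≤ 4 * (n : ℝ) ^ (1 / 4 : ℝ) := by
    have := log_natCast_le_rpow_div n (by norm_num : (0 : ℝ) < 1 / 4)
    linarith [show (n : ℝ) ^ (1 / 4 : ℝ) / (1 / 4) = 4 * (n : ℝ) ^ (1 / 4 : ℝ) by ring]
  calc (log n / n) ^ 2 ≤ (4 * (n : ℝ) ^ (1 / 4 : ℝ) / n) ^ 2 := by
        gcongr
    _ = 16 * (n : ℝ) ^ (-3 / 2 : ℝ) := by
        rw [mul_div_assoc, ← rpow_sub_one hn'.ne', mul_pow, ← rpow_mul_natCast hn'.le]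
        norm_num

namespace Chebyshev

theorem theta_natCast_succ_sub (n : ℕ) :
    θ (n + 1 : ℕ) - θ n = if (n + 1).Prime then log (n + 1 : ℕ) else 0 := by
  simp only [theta, Nat.floor_natCast, sum_filter]
  rw [sum_Ioc_succ_top n.zero_le, add_sub_cancel_left]

theorem theta_eq_sum_Iic (x : ℝ) : θ x = ∑ p ∈ (Iic ⌊x⌋₊).filter Nat.Prime, log p := by
  rw [theta_eq_sum_Icc, ← Nat.bot_eq_zero, Icc_bot]

theorem theta_two : θ 2 = log 2 := by
  rw [theta_eq_log_primorial, Nat.floor_ofNat, primorial_two, Nat.cast_ofNat]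

theorem eventually_mul_le_theta : ∀ᶠ x in atTop, log 2 / 2 * x ≤ θ x := by
  have hsqrt : (fun x ↦ 2 * √x * log x) =o[atTop] id := by
    have := (isBigO_refl sqrt atTop).mul_isLittleO (isLittleO_log_rpow_atTop one_half_pos)
    refine (this.const_mul_left 2).congr' (Eventually.of_forall fun x ↦ by ring) ?_
    filter_upwards [eventually_ge_atTop 0] with x hx
    rw [sqrt_eq_rpow, ← rpow_add' hx (by norm_num)]
    norm_num
  have hlog : (fun x ↦ log (x + 2)) =o[atTop] id :=
    (isLittleO_log_id_atTop.comp_tendsto (tendsto_atTop_add_const_right _ 2 tendsto_id)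
      ).trans_isBigO ((isBigO_refl _ _).add (isLittleO_const_id_atTop 2).isBigO)
  have herr := ((isLittleO_const_id_atTop (log 2)).add hlog).add hsqrt
  filter_upwards [herr.bound (half_pos (log_pos one_lt_two)), eventually_ge_atTop 1] with x hx h1x
  rw [Real.norm_eq_abs, id, Real.norm_of_nonneg (by linarith)] at hx
  linarith [theta_ge' h1x, le_abs_self (log 2 + log (x + 2) + 2 * √x * log x)]

theorem exists_pos_mul_le_theta : ∃ c > 0, ∀ x, 2 ≤ x → c * x ≤ θ x := by
  obtain ⟨X, hX⟩ := eventually_atTop.1 eventually_mul_le_theta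
  have hlog2 : 0 < log 2 := log_pos one_lt_two
  have hX' : 0 < max X 2 := by positivity
  refine ⟨min (log 2 / 2) (log 2 / max X 2), lt_min (half_pos hlog2) (div_pos hlog2 hX'), ?_⟩
  intro x hx
  rcases le_total X x with hXx | hxX
  · exact (mul_le_mul_of_nonneg_right (min_le_left _ _) (by linarith)).trans (hX x hXx)
  · calc min (log 2 / 2) (log 2 / max X 2) * x ≤ log 2 / max X 2 * max X 2 := by
          gcongr
          exacts [min_le_right _ _, hxX.trans (le_max_left _ _)]
      _ = θ 2 := by rw [div_mul_cancel₀ _ hX'.ne', theta_two]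
      _ ≤ θ x := theta_mono hx

theorem summable_theta_succ_sub_div_sq :
    Summable fun n : ℕ ↦ ((θ (n + 1 : ℕ) - θ n) / θ n) ^ 2 := by
  obtain ⟨c, hc, hcθ⟩ := exists_pos_mul_le_theta
  refine Summable.of_nonneg_of_le (fun n ↦ sq_nonneg _) (fun n ↦ ?_)
    (((summable_nat_add_iff 1).2 summable_log_div_self_sq).mul_left ((2 / c) ^ 2))
  rcases lt_or_ge n 2 with hn | hn
  · interval_cases n <;> simp [theta_one, theta_zero]
    positivity
  have hn' : (2 : ℝ) ≤ n := by exact_mod_cast hn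
  have hθn : c / 2 * (n + 1 : ℕ) ≤ θ n := by push_cast; nlinarith [hcθ n hn']
  have hinc : 0 ≤ θ (n + 1 : ℕ) - θ n := sub_nonneg.2 (theta_mono (by push_cast; linarith))
  have hinc' : θ (n + 1 : ℕ) - θ n ≤ log (n + 1 : ℕ) := by
    rw [theta_natCast_succ_sub]; split_ifs; exacts [le_rfl, log_natCast_nonneg _]
  calc ((θ (n + 1 : ℕ) - θ n) / θ n) ^ 2
      ≤ (log (n + 1 : ℕ) / (c / 2 * (n + 1 : ℕ))) ^ 2 := by gcongr
    _ = (2 / c) ^ 2 * (log (n + 1 : ℕ) / (n + 1 : ℕ)) ^ 2 := by field_simp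

theorem sum_log_div_theta_eq_sum_range (N : ℕ) :
    ∑ q ∈ (Iic N).filter Nat.Prime, log q / θ q =
      ∑ n ∈ range N, (θ (n + 1 : ℕ) - θ n) / θ (n + 1 : ℕ) := by
  rw [← Nat.range_succ_eq_Iic, sum_filter, sum_range_succ', if_neg Nat.not_prime_zero, add_zero]
  refine sum_congr rfl fun n _ ↦ ?_
  rw [theta_natCast_succ_sub]
  split_ifs <;> simp

theorem exists_abs_sum_log_div_theta_sub_log_le : ∃ C, ∀ x : ℝ, 2 ≤ x →
    |∑ q ∈ (Iic ⌊x⌋₊).filter Nat.Prime, log q / θ q - log x| ≤ C := by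
  obtain ⟨c, hc, hcθ⟩ := exists_pos_mul_le_theta
  refine ⟨|1 - log (log 2)| + ∑' n : ℕ, ((θ (n + 1 : ℕ) - θ n) / θ n) ^ 2 +
    (|log c| + |log (log 4)|), fun x hx ↦ ?_⟩
  set N := ⌊x⌋₊
  have hN : 2 ≤ N := Nat.le_floor (by exact_mod_cast hx)
  have hθN : θ N = θ x := (theta_eq_theta_coe_floor x).symm
  have hinitial : ∑ n ∈ range 2, (θ (n + 1 : ℕ) - θ n) / θ (n + 1 : ℕ) = 1 := by
    norm_num [sum_range_succ, theta_one, theta_zero, (theta_pos le_rfl).ne']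
  have htelescope := abs_sum_sub_div_sub_log_sub_log_le (u := fun n : ℕ ↦ θ n)
    (fun _ _ h ↦ theta_mono (by exact_mod_cast h)) (theta_pos le_rfl) hN
  have herror := summable_theta_succ_sub_div_sq.sum_le_tsum (Ico 2 N) fun n _ ↦ sq_nonneg _
  have hlog := abs_log_sub_log_le_of_mul_le_of_le_mul (by positivity) hc (hcθ x hx)
    (theta_le_log4_mul_x (by positivity))
  rw [sum_log_div_theta_eq_sum_range, ← sum_range_add_sum_Ico _ hN, hinitial]
  simp only [hθN, Nat.cast_ofNat, theta_two] at htelescope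
  calc _ = |(1 - log (log 2)) + (∑ n ∈ Ico 2 N, (θ (n + 1 : ℕ) - θ n) / θ (n + 1 : ℕ) -
        (log (θ x) - log (log 2))) + (log (θ x) - log x)| := by
        congr 1; ring
    _ ≤ _ := by
      grw [abs_add_le, abs_add_le, htelescope, herror, hlog]

end Chebyshev

/-- With `θ x = ∑_{p ≤ x, p prime} ln p` the first Chebyshev function,
`∑_{p ≤ x, p prime} ln p / θ p = ln x + O(1)` for `x ≥ 2`. -/
theorem sum_log_div_chebyshev_eq_log_add_bigO
    (θ : ℝ → ℝ)
    (hθ : ∀ x : ℝ, θ x = ∑ q ∈ (Finset.Iic ⌊x⌋₊).filter Nat.Prime, Real.log q) :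
    ∃ C : ℝ, 0 < C ∧ ∀ x : ℝ, 2 ≤ x →
      |(∑ q ∈ (Finset.Iic ⌊x⌋₊).filter Nat.Prime, Real.log q / θ q) - Real.log x| ≤ C := by
  obtain rfl : θ = Chebyshev.theta :=
    funext fun x ↦ (hθ x).trans (Chebyshev.theta_eq_sum_Iic x).symm
  obtain ⟨C, hC⟩ := Chebyshev.exists_abs_sum_log_div_theta_sub_log_le
  exact ⟨max C 1, by positivity, fun x hx ↦ (hC x hx).trans (le_max_left _ _)⟩
end
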